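/- Let (Z₁, Z₂) be a max-stable pair with extremal coefficient θ ∈ [1,2] and let λ > 0. Then the F^λ-madogram satisfies (1/2)·E[ |F(Z₁)^λ − F(Z₂)^λ| ] = (λ/(λ+1))·(θ−1)/(λ+θ). -/

import Mathlib

open MeasureTheory Real Filter
section
open intervalIntegral

/-- The unit Fréchet distribution function: `F(z) = exp(-1/z)` for `z > 0`, `0` otherwise. -/
noncomputable def frechetCDF (z : ℝ) : ℝ := if 0 < z then Real.exp (-1 / z) else 0

lemma frechetCDF_nonneg (z : ℝ) : 0 ≤ frechetCDF z := by
  unfold frechetCDF; split <;> positivity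

lemma frechetCDF_le_one (z : ℝ) : frechetCDF z ≤ 1 := by
  unfold frechetCDF; split
  · rename_i h
    rw [Real.exp_le_one_iff, neg_div]
    exact neg_nonpos.mpr (by positivity)
  · norm_num

lemma measurable_frechetCDF : Measurable frechetCDF := by
  unfold frechetCDF
  exact Measurable.ite (measurableSet_lt measurable_const measurable_id)
    (Real.measurable_exp.comp (measurable_const.div measurable_id)) measurable_const

lemma exp_neg_div_val {c lam t : ℝ} (hlam : 0 < lam) (ht0 : 0 < t) (ht1 : t < 1) :
    Real.exp (-c / (lam / (-Real.log t))) = t ^ (c / lam) := by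
  have hl : Real.log t < 0 := Real.log_neg ht0 ht1
  have h1 : -c / (lam / (-Real.log t)) = Real.log t * (c / lam) := by
    field_simp
  rw [h1, Real.rpow_def_of_pos ht0]

lemma frechetCDF_val {lam t : ℝ} (hlam : 0 < lam) (ht0 : 0 < t) (ht1 : t < 1) :
    frechetCDF (lam / (-Real.log t)) = t ^ (1 / lam) := by
  have hl : Real.log t < 0 := Real.log_neg ht0 ht1
  have hz : 0 < lam / (-Real.log t) := div_pos hlam (by linarith)
  rw [frechetCDF, if_pos hz, exp_neg_div_val hlam ht0 ht1]

lemma frechet_rpow_le_iff {lam t : ℝ} (hlam : 0 < lam) (ht0 : 0 < t) (ht1 : t < 1) (x : ℝ) :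
    frechetCDF x ^ lam ≤ t ↔ x ≤ lam / (-Real.log t) := by
  have hl : Real.log t < 0 := Real.log_neg ht0 ht1
  have hz : 0 < lam / (-Real.log t) := div_pos hlam (by linarith)
  unfold frechetCDF
  by_cases hx : 0 < x
  · rw [if_pos hx, ← Real.exp_mul, ← Real.le_log_iff_exp_le ht0]
    have h1 : -1 / x * lam = -lam / x := by ring
    rw [h1, div_le_iff₀ hx, le_div_iff₀ (by linarith : (0:ℝ) < -Real.log t)]
    constructor <;> intro h <;> nlinarith
  · rw [if_neg hx, Real.zero_rpow hlam.ne']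
    exact iff_of_true ht0.le (le_of_lt (lt_of_le_of_lt (le_of_not_gt hx) hz))

/-- The F^λ-madogram of a max-stable pair with extremal coefficient `θ` equals
`(λ/(λ+1))·(θ-1)/(λ+θ)`. -/
theorem f_lambda_madogram_max_stable
    {Ω : Type*} [MeasurableSpace Ω] (μ : Measure Ω) [IsProbabilityMeasure μ]
    (Z₁ Z₂ : Ω → ℝ) (hZ₁ : Measurable Z₁) (hZ₂ : Measurable Z₂)
    (θ lam : ℝ) (hθ : θ ∈ Set.Icc (1:ℝ) 2) (hlam : 0 < lam)
    (hm1 : ∀ z : ℝ, (μ {ω | Z₁ ω ≤ z}).toReal = frechetCDF z)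
    (hm2 : ∀ z : ℝ, (μ {ω | Z₂ ω ≤ z}).toReal = frechetCDF z)
    (hjoint : ∀ z : ℝ, 0 < z →
      (μ {ω | Z₁ ω ≤ z ∧ Z₂ ω ≤ z}).toReal = Real.exp (-θ / z)) :
    (1/2) * ∫ ω, |frechetCDF (Z₁ ω) ^ lam - frechetCDF (Z₂ ω) ^ lam| ∂μ =
      (lam / (lam + 1)) * (θ - 1) / (lam + θ) := by
  obtain ⟨hθ1, hθ2⟩ := hθ
  set U : Ω → ℝ := fun ω => frechetCDF (Z₁ ω) ^ lam with hUdef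
  set V : Ω → ℝ := fun ω => frechetCDF (Z₂ ω) ^ lam with hVdef
  set W : Ω → ℝ := fun ω => min (U ω) (V ω) with hWdef
  have hU0 : ∀ ω, 0 ≤ U ω := fun ω => Real.rpow_nonneg (frechetCDF_nonneg _) _
  have hV0 : ∀ ω, 0 ≤ V ω := fun ω => Real.rpow_nonneg (frechetCDF_nonneg _) _
  have hU1 : ∀ ω, U ω ≤ 1 := fun ω =>
    Real.rpow_le_one (frechetCDF_nonneg _) (frechetCDF_le_one _) hlam.le
  have hV1 : ∀ ω, V ω ≤ 1 := fun ω =>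
    Real.rpow_le_one (frechetCDF_nonneg _) (frechetCDF_le_one _) hlam.le
  have hmU : Measurable U :=
    (Real.continuous_rpow_const hlam.le).measurable.comp (measurable_frechetCDF.comp hZ₁)
  have hmV : Measurable V :=
    (Real.continuous_rpow_const hlam.le).measurable.comp (measurable_frechetCDF.comp hZ₂)
  have hmW : Measurable W := hmU.min hmV
  have hiU : Integrable U μ := by
    refine (integrable_const (1:ℝ)).mono' hmU.aestronglyMeasurable ?_
    filter_upwards with ω
    rw [Real.norm_eq_abs, abs_of_nonneg (hU0 ω)]
    exact hU1 ω
  have hiV : Integrable V μ := by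
    refine (integrable_const (1:ℝ)).mono' hmV.aestronglyMeasurable ?_
    filter_upwards with ω
    rw [Real.norm_eq_abs, abs_of_nonneg (hV0 ω)]
    exact hV1 ω
  have hiW : Integrable W μ := by
    refine (integrable_const (1:ℝ)).mono' hmW.aestronglyMeasurable ?_
    filter_upwards with ω
    rw [Real.norm_eq_abs, abs_of_nonneg (le_min (hU0 ω) (hV0 ω))]
    exact min_le_of_left_le (hU1 ω)
  -- CDF of U and V at t ∈ (0, 1]
  have cdfU : ∀ t ∈ Set.Ioc (0:ℝ) 1, (μ {ω | U ω ≤ t}).toReal = t ^ (1/lam) := by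
    rintro t ⟨ht0, ht1⟩
    rcases eq_or_lt_of_le ht1 with rfl | ht1
    · have : {ω | U ω ≤ (1:ℝ)} = Set.univ := by
        ext ω; simp [hU1 ω]
      rw [this, measure_univ, ENNReal.toReal_one, Real.one_rpow]
    · have hset : {ω | U ω ≤ t} = {ω | Z₁ ω ≤ lam / (-Real.log t)} := by
        ext ω; exact frechet_rpow_le_iff hlam ht0 ht1 (Z₁ ω)
      rw [hset, hm1, frechetCDF_val hlam ht0 ht1]
  have cdfV : ∀ t ∈ Set.Ioc (0:ℝ) 1, (μ {ω | V ω ≤ t}).toReal = t ^ (1/lam) := by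
    rintro t ⟨ht0, ht1⟩
    rcases eq_or_lt_of_le ht1 with rfl | ht1
    · have : {ω | V ω ≤ (1:ℝ)} = Set.univ := by
        ext ω; simp [hV1 ω]
      rw [this, measure_univ, ENNReal.toReal_one, Real.one_rpow]
    · have hset : {ω | V ω ≤ t} = {ω | Z₂ ω ≤ lam / (-Real.log t)} := by
        ext ω; exact frechet_rpow_le_iff hlam ht0 ht1 (Z₂ ω)
      rw [hset, hm2, frechetCDF_val hlam ht0 ht1]
  have cdfUV : ∀ t ∈ Set.Ioc (0:ℝ) 1,
      (μ ({ω | U ω ≤ t} ∩ {ω | V ω ≤ t})).toReal = t ^ (θ/lam) := by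
    rintro t ⟨ht0, ht1⟩
    rcases eq_or_lt_of_le ht1 with rfl | ht1
    · have : {ω | U ω ≤ (1:ℝ)} ∩ {ω | V ω ≤ (1:ℝ)} = Set.univ := by
        ext ω; simp [hU1 ω, hV1 ω]
      rw [this, measure_univ, ENNReal.toReal_one, Real.one_rpow]
    · have hl : Real.log t < 0 := Real.log_neg ht0 ht1
      have hz : 0 < lam / (-Real.log t) := div_pos hlam (by linarith)
      have hset : {ω | U ω ≤ t} ∩ {ω | V ω ≤ t} =
          {ω | Z₁ ω ≤ lam / (-Real.log t) ∧ Z₂ ω ≤ lam / (-Real.log t)} := by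
        ext ω
        simp only [Set.mem_inter_iff, Set.mem_setOf_eq]
        rw [frechet_rpow_le_iff hlam ht0 ht1 (Z₁ ω), frechet_rpow_le_iff hlam ht0 ht1 (Z₂ ω)]
      rw [hset, hjoint _ hz, exp_neg_div_val hlam ht0 ht1]
  -- measurability of level sets
  have hmsU : ∀ t : ℝ, MeasurableSet {ω | U ω ≤ t} := fun t => hmU measurableSet_Iic
  have hmsV : ∀ t : ℝ, MeasurableSet {ω | V ω ≤ t} := fun t => hmV measurableSet_Iic
  -- tail probability of U on (0,1]
  have tailU : ∀ t ∈ Set.Ioc (0:ℝ) 1, (μ {ω | t < U ω}).toReal = 1 - t ^ (1/lam) := by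
    intro t ht
    have hc : {ω | t < U ω} = {ω | U ω ≤ t}ᶜ := by ext ω; simp [not_le]
    rw [hc, prob_compl_eq_one_sub (hmsU t),
      ENNReal.toReal_sub_of_le prob_le_one ENNReal.one_ne_top, ENNReal.toReal_one, cdfU t ht]
  have tailV : ∀ t ∈ Set.Ioc (0:ℝ) 1, (μ {ω | t < V ω}).toReal = 1 - t ^ (1/lam) := by
    intro t ht
    have hc : {ω | t < V ω} = {ω | V ω ≤ t}ᶜ := by ext ω; simp [not_le]
    rw [hc, prob_compl_eq_one_sub (hmsV t),
      ENNReal.toReal_sub_of_le prob_le_one ENNReal.one_ne_top, ENNReal.toReal_one, cdfV t ht]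
  have tailW : ∀ t ∈ Set.Ioc (0:ℝ) 1,
      (μ {ω | t < W ω}).toReal = 1 - 2 * t ^ (1/lam) + t ^ (θ/lam) := by
    intro t ht
    have hc : {ω | t < W ω} = ({ω | U ω ≤ t} ∪ {ω | V ω ≤ t})ᶜ := by
      ext ω
      simp only [Set.mem_setOf_eq, Set.mem_compl_iff, Set.mem_union, not_or, not_le, hWdef,
        lt_min_iff]
    have hunion := measure_union_add_inter (μ := μ) {ω | U ω ≤ t} (hmsV t)
    have hU' := measure_ne_top μ {ω | U ω ≤ t}
    have hV' := measure_ne_top μ {ω | V ω ≤ t}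
    have hunion' : (μ ({ω | U ω ≤ t} ∪ {ω | V ω ≤ t})).toReal
        = (μ {ω | U ω ≤ t}).toReal + (μ {ω | V ω ≤ t}).toReal
          - (μ ({ω | U ω ≤ t} ∩ {ω | V ω ≤ t})).toReal := by
      have := congrArg ENNReal.toReal hunion
      rw [ENNReal.toReal_add (measure_ne_top μ _) (measure_ne_top μ _),
        ENNReal.toReal_add (measure_ne_top μ _) (measure_ne_top μ _)] at this
      linarith
    rw [hc, prob_compl_eq_one_sub ((hmsU t).union (hmsV t)),
      ENNReal.toReal_sub_of_le prob_le_one ENNReal.one_ne_top, ENNReal.toReal_one, hunion',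
      cdfU t ht, cdfV t ht, cdfUV t ht]
    ring
  -- integrals via layer cake
  have hIocInter : Set.Ioi (0:ℝ) ∩ Set.Ioc 0 1 = Set.Ioc 0 1 :=
    Set.inter_eq_right.mpr (fun x hx => hx.1)
  have layercake : ∀ (f : Ω → ℝ) (g : ℝ → ℝ), Integrable f μ → (∀ ω, 0 ≤ f ω) →
      (∀ ω, f ω ≤ 1) →
      (∀ t ∈ Set.Ioc (0:ℝ) 1, (μ {ω | t < f ω}).toReal = g t) →
      ∫ ω, f ω ∂μ = ∫ t in (0:ℝ)..1, g t := by
    intro f g hif hf0 hf1 htail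
    rw [hif.integral_eq_integral_meas_lt (Eventually.of_forall hf0)]
    have : ∀ t ∈ Set.Ioi (0:ℝ), (μ {ω | t < f ω}).toReal = (Set.Ioc 0 1).indicator g t := by
      intro t ht
      by_cases h1 : t ≤ 1
      · rw [Set.indicator_of_mem (Set.mem_Ioc.mpr ⟨ht, h1⟩) g]
        exact htail t (Set.mem_Ioc.mpr ⟨ht, h1⟩)
      · rw [Set.indicator_of_notMem (fun hmem => h1 hmem.2)]
        have : {ω | t < f ω} = ∅ := by
          ext ω; simp only [Set.mem_setOf_eq, Set.mem_empty_iff_false, iff_false, not_lt]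
          exact (hf1 ω).trans (le_of_not_ge h1)
        rw [this, measure_empty, ENNReal.toReal_zero]
    simp only [measureReal_def]
    rw [setIntegral_congr_fun measurableSet_Ioi this,
      setIntegral_indicator measurableSet_Ioc, hIocInter,
      intervalIntegral.integral_of_le zero_le_one]
  -- the three integrals
  have hIi1 : IntervalIntegrable (fun t : ℝ => t ^ (1/lam)) volume 0 1 :=
    intervalIntegrable_rpow' (by linarith [one_div_pos.mpr hlam])
  have hIiθ : IntervalIntegrable (fun t : ℝ => t ^ (θ/lam)) volume 0 1 :=
    intervalIntegrable_rpow' (by linarith [div_pos (by linarith : (0:ℝ) < θ) hlam])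
  have e1 : ∫ t in (0:ℝ)..1, t ^ (1/lam) = lam / (lam + 1) := by
    rw [integral_rpow (Or.inl (by linarith [one_div_pos.mpr hlam]))]
    rw [Real.one_rpow, Real.zero_rpow (by positivity)]
    rw [div_eq_div_iff (by positivity) (by positivity)]
    field_simp
    ring
  have e2 : ∫ t in (0:ℝ)..1, t ^ (θ/lam) = lam / (θ + lam) := by
    have hq : (0:ℝ) < θ/lam := div_pos (by linarith) hlam
    rw [integral_rpow (Or.inl (by linarith))]
    rw [Real.one_rpow, Real.zero_rpow (by positivity)]
    rw [div_eq_div_iff (by positivity) (by positivity)]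
    field_simp
    norm_num
  have intU : ∫ ω, U ω ∂μ = 1 - lam / (lam + 1) := by
    rw [layercake U (fun t => 1 - t ^ (1/lam)) hiU hU0 hU1 tailU,
      intervalIntegral.integral_sub intervalIntegrable_const hIi1,
      intervalIntegral.integral_const, e1]
    norm_num
  have intV : ∫ ω, V ω ∂μ = 1 - lam / (lam + 1) := by
    rw [layercake V (fun t => 1 - t ^ (1/lam)) hiV hV0 hV1 tailV,
      intervalIntegral.integral_sub intervalIntegrable_const hIi1,
      intervalIntegral.integral_const, e1]
    norm_num
  have intW : ∫ ω, W ω ∂μ = 1 - 2 * (lam / (lam + 1)) + lam / (θ + lam) := by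
    rw [layercake W (fun t => 1 - 2 * t ^ (1/lam) + t ^ (θ/lam)) hiW
        (fun ω => le_min (hU0 ω) (hV0 ω)) (fun ω => min_le_of_left_le (hU1 ω)) tailW,
      intervalIntegral.integral_add (intervalIntegrable_const.sub (hIi1.const_mul 2)) hIiθ,
      intervalIntegral.integral_sub intervalIntegrable_const (hIi1.const_mul 2),
      intervalIntegral.integral_const, intervalIntegral.integral_const_mul, e1, e2]
    norm_num
  -- pointwise identity
  have habs : ∀ ω, |U ω - V ω| = U ω + V ω - 2 * W ω := by
    intro ω
    rcases le_total (U ω) (V ω) with h | h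
    · rw [abs_of_nonpos (by linarith), hWdef]
      simp only [min_eq_left h]
      ring
    · rw [abs_of_nonneg (by linarith), hWdef]
      simp only [min_eq_right h]
      ring
  have hInt : ∫ ω, |frechetCDF (Z₁ ω) ^ lam - frechetCDF (Z₂ ω) ^ lam| ∂μ
      = ∫ ω, (U ω + V ω - 2 * W ω) ∂μ := by
    apply MeasureTheory.integral_congr_ae
    filter_upwards with ω
    exact habs ω
  rw [hInt, MeasureTheory.integral_sub (by exact hiU.add hiV) (by exact hiW.const_mul 2),
    MeasureTheory.integral_add hiU hiV, MeasureTheory.integral_const_mul 2 W, intU, intV, intW]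
  have h1 : lam + 1 ≠ 0 := by positivity
  have h2 : lam + θ ≠ 0 := by positivity
  have h3 : θ + lam ≠ 0 := by positivity
  field_simp
  ring

end
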